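/- Let m, k ≥ 1 be integers and let b, a, a_1, …, a_m be real numbers. The following are equivalent: (1) the series ∑_{i ∈ ℕ₊^{m+k}} i_1^{a_1} ⋯ i_m^{a_m} (i_{m+1} + ⋯ + i_{m+k})^a / (i_1 + ⋯ + i_{m+k})^b converges; (2) the series ∑_{i ∈ ℕ₊^{m+1}} i_1^{a_1} ⋯ i_m^{a_m} i_{m+1}^{a+k−1} / (i_1 + ⋯ + i_{m+1})^b converges; (3) b > max{ ∑_{j ∈ J} (a_j + 1), a + k, a + k + ∑_{j ∈ J} (a_j + 1) : ∅ ≠ J ⊆ {1, …, m} }. -/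

import Mathlib

open Real Finset NNReal ENNReal

lemma summable_iff_ofReal_ne_top {α : Type*} {f : α → ℝ} (hf : ∀ a, 0 ≤ f a) :
    Summable f ↔ ∑' a, ENNReal.ofReal (f a) ≠ ⊤ := by
  rw [show (fun a => ENNReal.ofReal (f a)) = fun a => ((Real.toNNReal (f a) : ℝ≥0) : ℝ≥0∞) from rfl,
    ENNReal.tsum_coe_ne_top_iff_summable]
  constructor
  · intro h
    exact NNReal.summable_coe.mp (by simpa [Real.coe_toNNReal _ (hf _)] using h)
  · intro h
    have := NNReal.summable_coe.mpr h
    simpa [Real.coe_toNNReal _ (hf _)] using this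

lemma summable_pnat_rpow {p : ℝ} :
    Summable (fun y : ℕ+ => ((y : ℕ) : ℝ) ^ p) ↔ p < -1 := by
  rw [← Equiv.pnatEquivNat.symm.summable_iff]
  have : ((fun y : ℕ+ => ((y : ℕ) : ℝ) ^ p) ∘ Equiv.pnatEquivNat.symm)
      = fun n : ℕ => ((n + 1 : ℕ) : ℝ) ^ p := by
    funext n
    simp [Equiv.pnatEquivNat]
  rw [this]
  exact (_root_.summable_nat_add_iff 1).trans summable_nat_rpow

/-- two-sided ratio bound for rpow -/
lemma rpow_le_ratio {u v C : ℝ} (hu : 0 < u) (hC : 1 ≤ C) (h1 : u ≤ C * v) (h2 : v ≤ C * u)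
    (p : ℝ) : u ^ p ≤ C ^ |p| * v ^ p := by
  have hC0 : 0 < C := lt_of_lt_of_le one_pos hC
  have hv : 0 < v := by nlinarith
  rcases le_or_gt 0 p with hp | hp
  · rw [abs_of_nonneg hp]
    calc u ^ p ≤ (C * v) ^ p := Real.rpow_le_rpow hu.le h1 hp
    _ = C ^ p * v ^ p := Real.mul_rpow hC0.le hv.le
  · rw [abs_of_neg hp]
    have : v / C ≤ u := by rw [div_le_iff₀ hC0]; linarith [h2, mul_comm u C]
    calc u ^ p ≤ (v / C) ^ p := Real.rpow_le_rpow_of_nonpos (by positivity) this hp.le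
    _ = C ^ (-p) * v ^ p := by
        rw [Real.div_rpow hv.le hC0.le, div_eq_mul_inv, ← Real.rpow_neg hC0.le, mul_comm]

lemma rpow_ratio_ge {u v C : ℝ} (hu : 0 < u) (hv : 0 < v) (hC : 1 ≤ C)
    (h1 : v ≤ C * u) (h2 : u ≤ C * v) (p : ℝ) : C ^ (-|p|) * v ^ p ≤ u ^ p := by
  have hC0 : (0:ℝ) < C := lt_of_lt_of_le one_pos hC
  have h := rpow_le_ratio hv hC h1 h2 p
  calc C ^ (-|p|) * v ^ p ≤ C ^ (-|p|) * (C ^ |p| * u ^ p) :=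
        mul_le_mul_of_nonneg_left h (Real.rpow_nonneg hC0.le _)
  _ = u ^ p := by rw [← mul_assoc, ← Real.rpow_add hC0, neg_add_cancel, Real.rpow_zero, one_mul]

lemma div_rpow_eq {u : ℝ} (hu : 0 ≤ u) (t b : ℝ) : t / u ^ b = t * u ^ (-b) := by
  rw [Real.rpow_neg hu, div_eq_mul_inv]

lemma pnat_pos (y : ℕ+) : (0:ℝ) < ((y : ℕ) : ℝ) := by exact_mod_cast y.pos

lemma pnat_one_le (y : ℕ+) : (1:ℝ) ≤ ((y : ℕ) : ℝ) := by exact_mod_cast y.one_le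

/-- Summability of the inner series in `y`. -/
lemma summable_inner {S : ℝ} (hS : 0 ≤ S) (c b : ℝ) :
    Summable (fun y : ℕ+ => ((y:ℕ):ℝ) ^ c / (S + ((y:ℕ):ℝ)) ^ b) ↔ c - b < -1 := by
  have hC : (1:ℝ) ≤ S + 2 := by linarith
  have hC0 : (0:ℝ) < S + 2 := by linarith
  have key : ∀ y : ℕ+, ((y:ℕ):ℝ) ^ c / (S + ((y:ℕ):ℝ)) ^ b
      = ((y:ℕ):ℝ) ^ c * (S + ((y:ℕ):ℝ)) ^ (-b) := by
    intro y
    exact div_rpow_eq (by linarith [pnat_pos y]) _ _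
  have bound1 : ∀ y : ℕ+, ((y:ℕ):ℝ) ^ c / (S + ((y:ℕ):ℝ)) ^ b
      ≤ (S+2) ^ |b| * ((y:ℕ):ℝ) ^ (c - b) := by
    intro y
    have hY := pnat_pos y
    have hY1 := pnat_one_le y
    have hSY : (0:ℝ) < S + ((y:ℕ):ℝ) := by linarith
    have h1 : (S + ((y:ℕ):ℝ)) ^ (-b) ≤ (S+2) ^ |(-b)| * ((y:ℕ):ℝ) ^ (-b) :=
      rpow_le_ratio hSY hC (by nlinarith) (by nlinarith) (-b)
    rw [abs_neg] at h1
    rw [key y]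
    calc ((y:ℕ):ℝ) ^ c * (S + ((y:ℕ):ℝ)) ^ (-b)
        ≤ ((y:ℕ):ℝ) ^ c * ((S+2) ^ |b| * ((y:ℕ):ℝ) ^ (-b)) :=
          mul_le_mul_of_nonneg_left h1 (Real.rpow_nonneg hY.le _)
      _ = (S+2) ^ |b| * (((y:ℕ):ℝ) ^ c * ((y:ℕ):ℝ) ^ (-b)) := by ring
      _ = (S+2) ^ |b| * ((y:ℕ):ℝ) ^ (c - b) := by
          rw [← Real.rpow_add hY, sub_eq_add_neg]
  have bound2 : ∀ y : ℕ+, ((y:ℕ):ℝ) ^ (c - b)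
      ≤ (S+2) ^ |b| * (((y:ℕ):ℝ) ^ c / (S + ((y:ℕ):ℝ)) ^ b) := by
    intro y
    have hY := pnat_pos y
    have hY1 := pnat_one_le y
    have hSY : (0:ℝ) < S + ((y:ℕ):ℝ) := by linarith
    have h1 : ((y:ℕ):ℝ) ^ (-b) ≤ (S+2) ^ |(-b)| * (S + ((y:ℕ):ℝ)) ^ (-b) :=
      rpow_le_ratio hY hC (by nlinarith) (by nlinarith) (-b)
    rw [abs_neg] at h1
    rw [key y]
    calc ((y:ℕ):ℝ) ^ (c - b) = ((y:ℕ):ℝ) ^ c * ((y:ℕ):ℝ) ^ (-b) := by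
          rw [← Real.rpow_add hY, sub_eq_add_neg]
      _ ≤ ((y:ℕ):ℝ) ^ c * ((S+2) ^ |b| * (S + ((y:ℕ):ℝ)) ^ (-b)) :=
          mul_le_mul_of_nonneg_left h1 (Real.rpow_nonneg hY.le _)
      _ = (S+2) ^ |b| * (((y:ℕ):ℝ) ^ c * (S + ((y:ℕ):ℝ)) ^ (-b)) := by ring
  constructor
  · intro h
    have h2 : Summable (fun y : ℕ+ => (S+2) ^ |b| * (((y:ℕ):ℝ) ^ c / (S + ((y:ℕ):ℝ)) ^ b)) :=
      h.mul_left _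
    have h3 : Summable (fun y : ℕ+ => ((y:ℕ):ℝ) ^ (c - b)) :=
      Summable.of_nonneg_of_le (fun y => Real.rpow_nonneg (pnat_pos y).le _) bound2 h2
    exact summable_pnat_rpow.mp h3
  · intro h
    have h2 : Summable (fun y : ℕ+ => (S+2) ^ |b| * ((y:ℕ):ℝ) ^ (c - b)) :=
      (summable_pnat_rpow.mpr h).mul_left _
    refine Summable.of_nonneg_of_le (fun y => ?_) bound1 h2
    have hY := pnat_pos y
    have hSY : (0:ℝ) < S + ((y:ℕ):ℝ) := by linarith
    positivity

/-- Upper bound on the tail sum. -/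
lemma upperT (b c ε : ℝ) (hε : 0 < ε) (hcb : c + 1 < b) :
    ∃ K : ℝ, 0 < K ∧ ∀ S : ℝ, 1 ≤ S →
      ∑' y : ℕ+, ((y:ℕ):ℝ) ^ c / (S + ((y:ℕ):ℝ)) ^ b
        ≤ K * S ^ (max (c+1) 0 + ε - b) := by
  set ε' := min ε ((b - c - 1)/2) with hε'def
  have hε' : 0 < ε' := lt_min hε (by linarith)
  have hε'ε : ε' ≤ ε := min_le_left _ _
  have hε'b : c - b + 1 + ε' < 0 := by
    have h := min_le_right ε ((b - c - 1)/2)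
    have : ε' ≤ (b - c - 1)/2 := h
    linarith
  have hZ1s : Summable (fun y : ℕ+ => ((y:ℕ):ℝ) ^ (-1-ε)) :=
    summable_pnat_rpow.mpr (by linarith)
  have hZ2s : Summable (fun y : ℕ+ => ((y:ℕ):ℝ) ^ (-1-ε')) :=
    summable_pnat_rpow.mpr (by linarith)
  set Z₁ := ∑' y : ℕ+, ((y:ℕ):ℝ) ^ (-1-ε) with hZ1def
  set Z₂ := ∑' y : ℕ+, ((y:ℕ):ℝ) ^ (-1-ε') with hZ2def
  have hZ1 : 0 ≤ Z₁ := tsum_nonneg (fun y => Real.rpow_nonneg (pnat_pos y).le _)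
  have hZ2 : 0 ≤ Z₂ := tsum_nonneg (fun y => Real.rpow_nonneg (pnat_pos y).le _)
  have h2b : (0:ℝ) < 2 ^ |b| := Real.rpow_pos_of_pos two_pos _
  refine ⟨2 ^ |b| * (Z₁ + Z₂) + 1, by positivity, fun S hS => ?_⟩
  have hS0 : (0:ℝ) < S := by linarith
  set M := max (c+1) 0 with hMdef
  have hM0 : 0 ≤ M := le_max_right _ _
  have hMc : c + 1 ≤ M := le_max_left _ _
  set g := fun y : ℕ+ => 2 ^ |b| * S ^ (M + ε - b) * ((y:ℕ):ℝ) ^ (-1-ε) with hgdef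
  set h := fun y : ℕ+ => 2 ^ |b| * S ^ (c - b + 1 + ε') * ((y:ℕ):ℝ) ^ (-1-ε') with hhdef
  have hgs : Summable g := hZ1s.mul_left _
  have hhs : Summable h := hZ2s.mul_left _
  have hts : Summable (fun y : ℕ+ => ((y:ℕ):ℝ) ^ c / (S + ((y:ℕ):ℝ)) ^ b) :=
    (summable_inner hS0.le c b).mpr (by linarith)
  have pointwise : ∀ y : ℕ+, ((y:ℕ):ℝ) ^ c / (S + ((y:ℕ):ℝ)) ^ b ≤ g y + h y := by
    intro y
    have hY := pnat_pos y
    have hY1 := pnat_one_le y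
    have hSY : (0:ℝ) < S + ((y:ℕ):ℝ) := by linarith
    have hgy : 0 ≤ g y := by
      simp only [hgdef]
      positivity
    have hhy : 0 ≤ h y := by
      simp only [hhdef]
      positivity
    rw [div_rpow_eq hSY.le]
    rcases le_or_gt ((y:ℕ):ℝ) S with hyS | hyS
    · -- y ≤ S
      have h1 : (S + ((y:ℕ):ℝ)) ^ (-b) ≤ 2 ^ |(-b)| * S ^ (-b) :=
        rpow_le_ratio hSY (by norm_num) (by linarith) (by linarith) (-b)
      rw [abs_neg] at h1
      have h2 : ((y:ℕ):ℝ) ^ c ≤ ((y:ℕ):ℝ) ^ (-1-ε) * S ^ (M + ε) := by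
        rcases le_or_gt 0 (c+1+ε) with hcase | hcase
        · have e1 : ((y:ℕ):ℝ) ^ c = ((y:ℕ):ℝ) ^ (-1-ε) * ((y:ℕ):ℝ) ^ (c+1+ε) := by
            rw [← Real.rpow_add hY]; ring_nf
          rw [e1]
          have e2 : ((y:ℕ):ℝ) ^ (c+1+ε) ≤ S ^ (c+1+ε) :=
            Real.rpow_le_rpow hY.le hyS hcase
          have e3 : S ^ (c+1+ε) ≤ S ^ (M + ε) :=
            Real.rpow_le_rpow_of_exponent_le hS (by linarith)
          exact mul_le_mul_of_nonneg_left (e2.trans e3) (Real.rpow_nonneg hY.le _)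
        · have e1 : ((y:ℕ):ℝ) ^ c ≤ ((y:ℕ):ℝ) ^ (-1-ε) :=
            Real.rpow_le_rpow_of_exponent_le hY1 (by linarith)
          have e2 : (1:ℝ) ≤ S ^ (M + ε) :=
            Real.one_le_rpow hS (by linarith)
          calc ((y:ℕ):ℝ) ^ c ≤ ((y:ℕ):ℝ) ^ (-1-ε) := e1
            _ = ((y:ℕ):ℝ) ^ (-1-ε) * 1 := by ring
            _ ≤ ((y:ℕ):ℝ) ^ (-1-ε) * S ^ (M + ε) :=
                mul_le_mul_of_nonneg_left e2 (Real.rpow_nonneg hY.le _)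
      calc ((y:ℕ):ℝ) ^ c * (S + ((y:ℕ):ℝ)) ^ (-b)
          ≤ (((y:ℕ):ℝ) ^ (-1-ε) * S ^ (M + ε)) * (2 ^ |b| * S ^ (-b)) := by
            apply mul_le_mul h2 h1 (Real.rpow_nonneg hSY.le _)
            positivity
        _ = 2 ^ |b| * (S ^ (M + ε) * S ^ (-b)) * ((y:ℕ):ℝ) ^ (-1-ε) := by ring
        _ = g y := by rw [← Real.rpow_add hS0]; simp only [hgdef]; ring_nf
        _ ≤ g y + h y := le_add_of_nonneg_right hhy
    · -- S < y
      have h1 : (S + ((y:ℕ):ℝ)) ^ (-b) ≤ 2 ^ |(-b)| * ((y:ℕ):ℝ) ^ (-b) :=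
        rpow_le_ratio hSY (by norm_num) (by linarith) (by linarith) (-b)
      rw [abs_neg] at h1
      have h2 : ((y:ℕ):ℝ) ^ c * (S + ((y:ℕ):ℝ)) ^ (-b)
          ≤ 2 ^ |b| * ((y:ℕ):ℝ) ^ (c - b) := by
        calc ((y:ℕ):ℝ) ^ c * (S + ((y:ℕ):ℝ)) ^ (-b)
            ≤ ((y:ℕ):ℝ) ^ c * (2 ^ |b| * ((y:ℕ):ℝ) ^ (-b)) :=
              mul_le_mul_of_nonneg_left h1 (Real.rpow_nonneg hY.le _)
          _ = 2 ^ |b| * (((y:ℕ):ℝ) ^ c * ((y:ℕ):ℝ) ^ (-b)) := by ring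
          _ = 2 ^ |b| * ((y:ℕ):ℝ) ^ (c - b) := by
              rw [← Real.rpow_add hY, sub_eq_add_neg]
      have h3 : ((y:ℕ):ℝ) ^ (c - b) ≤ ((y:ℕ):ℝ) ^ (-1-ε') * S ^ (c - b + 1 + ε') := by
        have e1 : ((y:ℕ):ℝ) ^ (c - b) = ((y:ℕ):ℝ) ^ (-1-ε') * ((y:ℕ):ℝ) ^ (c - b + 1 + ε') := by
          rw [← Real.rpow_add hY]; ring_nf
        rw [e1]
        have e2 : ((y:ℕ):ℝ) ^ (c - b + 1 + ε') ≤ S ^ (c - b + 1 + ε') :=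
          Real.rpow_le_rpow_of_nonpos hS0 hyS.le hε'b.le
        exact mul_le_mul_of_nonneg_left e2 (Real.rpow_nonneg hY.le _)
      calc ((y:ℕ):ℝ) ^ c * (S + ((y:ℕ):ℝ)) ^ (-b)
          ≤ 2 ^ |b| * (((y:ℕ):ℝ) ^ (-1-ε') * S ^ (c - b + 1 + ε')) :=
            h2.trans (mul_le_mul_of_nonneg_left h3 h2b.le)
        _ = h y := by simp only [hhdef]; ring
        _ ≤ g y + h y := le_add_of_nonneg_left hgy
  have sum_le : ∑' y : ℕ+, ((y:ℕ):ℝ) ^ c / (S + ((y:ℕ):ℝ)) ^ b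
      ≤ ∑' y : ℕ+, (g y + h y) :=
    Summable.tsum_le_tsum pointwise hts (hgs.add hhs)
  rw [Summable.tsum_add hgs hhs] at sum_le
  have tg : ∑' y : ℕ+, g y = 2 ^ |b| * S ^ (M + ε - b) * Z₁ := tsum_mul_left
  have th : ∑' y : ℕ+, h y = 2 ^ |b| * S ^ (c - b + 1 + ε') * Z₂ := tsum_mul_left
  rw [tg, th] at sum_le
  have hexp : S ^ (c - b + 1 + ε') ≤ S ^ (M + ε - b) :=
    Real.rpow_le_rpow_of_exponent_le hS (by linarith)
  have hSM : 0 ≤ S ^ (M + ε - b) := Real.rpow_nonneg hS0.le _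
  calc ∑' y : ℕ+, ((y:ℕ):ℝ) ^ c / (S + ((y:ℕ):ℝ)) ^ b
      ≤ 2 ^ |b| * S ^ (M + ε - b) * Z₁ + 2 ^ |b| * S ^ (c - b + 1 + ε') * Z₂ := sum_le
    _ ≤ 2 ^ |b| * S ^ (M + ε - b) * Z₁ + 2 ^ |b| * S ^ (M + ε - b) * Z₂ := by
        have := mul_le_mul_of_nonneg_left hexp h2b.le
        nlinarith [this, hZ2]
    _ = 2 ^ |b| * (Z₁ + Z₂) * S ^ (M + ε - b) := by ring
    _ ≤ (2 ^ |b| * (Z₁ + Z₂) + 1) * S ^ (M + ε - b) := by nlinarith [hSM]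

/-- Lower bound on the tail sum. -/
lemma lowerT (b c : ℝ) (hcb : c + 1 < b) :
    ∃ κ : ℝ, 0 < κ ∧ ∀ S : ℝ, 1 ≤ S →
      κ * S ^ (max (c+1) 0 - b) ≤ ∑' y : ℕ+, ((y:ℕ):ℝ) ^ c / (S + ((y:ℕ):ℝ)) ^ b := by
  rcases le_or_gt (c+1) 0 with hc | hc
  · refine ⟨(2:ℝ) ^ (-|b|), Real.rpow_pos_of_pos two_pos _, fun S hS => ?_⟩
    have hS0 : (0:ℝ) < S := by linarith
    have hts : Summable (fun y : ℕ+ => ((y:ℕ):ℝ) ^ c / (S + ((y:ℕ):ℝ)) ^ b) :=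
      (summable_inner hS0.le c b).mpr (by linarith)
    have hnn : ∀ y : ℕ+, 0 ≤ ((y:ℕ):ℝ) ^ c / (S + ((y:ℕ):ℝ)) ^ b := by
      intro y
      have hY := pnat_pos y
      have hSY : (0:ℝ) < S + ((y:ℕ):ℝ) := by linarith
      positivity
    have hterm : ((((1:ℕ+):ℕ):ℝ)) ^ c / (S + (((1:ℕ+):ℕ):ℝ)) ^ b
        ≤ ∑' y : ℕ+, ((y:ℕ):ℝ) ^ c / (S + ((y:ℕ):ℝ)) ^ b :=
      Summable.le_tsum hts 1 (fun j _ => hnn j)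
    have e2 : (2:ℝ) ^ (-|b|) * S ^ (-b) ≤ (S + 1) ^ (-b) := by
      have := rpow_ratio_ge (u := S + 1) (v := S) (C := 2)
        (by linarith) hS0 (by norm_num) (by linarith) (by linarith) (-b)
      rwa [abs_neg] at this
    rw [max_eq_right hc, zero_sub]
    refine le_trans ?_ hterm
    have h1 : ((((1:ℕ+):ℕ):ℝ)) = (1:ℝ) := by norm_num
    rw [h1, Real.one_rpow]
    rw [show (1:ℝ) / (S + 1) ^ b = (S+1) ^ (-b) by
      rw [Real.rpow_neg (by linarith), one_div]]
    exact e2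
  · -- c + 1 > 0 : use a block of about S terms above S
    refine ⟨(2:ℝ) ^ (-|c|) * (3:ℝ) ^ (-|b|) / 2, by positivity, fun S hS => ?_⟩
    have hS0 : (0:ℝ) < S := by linarith
    have hts : Summable (fun y : ℕ+ => ((y:ℕ):ℝ) ^ c / (S + ((y:ℕ):ℝ)) ^ b) :=
      (summable_inner hS0.le c b).mpr (by linarith)
    have hnn : ∀ y : ℕ+, 0 ≤ ((y:ℕ):ℝ) ^ c / (S + ((y:ℕ):ℝ)) ^ b := by
      intro y
      have hY := pnat_pos y
      have hSY : (0:ℝ) < S + ((y:ℕ):ℝ) := by linarith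
      positivity
    set N := ⌊S⌋₊ with hNdef
    have hN1 : 1 ≤ N := Nat.le_floor (by exact_mod_cast hS)
    have hNS : (N:ℝ) ≤ S := Nat.floor_le hS0.le
    have hSN : S < (N:ℝ) + 1 := Nat.lt_floor_add_one S
    have hS2N : S ≤ 2 * N := by
      have : (1:ℝ) ≤ (N:ℝ) := by exact_mod_cast hN1
      linarith
    set emb : ℕ ↪ ℕ+ := ⟨fun i => ⟨N + 1 + i, by positivity⟩, by
      intro x y hxy
      have := congrArg (fun z : ℕ+ => (z : ℕ)) hxy
      simpa using this⟩ with hembdef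
    set F : Finset ℕ+ := (Finset.range N).map emb with hFdef
    have hFcard : F.card = N := by rw [hFdef, Finset.card_map, Finset.card_range]
    set κ' := (2:ℝ) ^ (-|c|) * (3:ℝ) ^ (-|b|) with hκ'def
    have hterm : ∀ y ∈ F, κ' * S ^ (c - b) ≤ ((y:ℕ):ℝ) ^ c / (S + ((y:ℕ):ℝ)) ^ b := by
      intro y hy
      rw [hFdef, Finset.mem_map] at hy
      obtain ⟨i, hi, rfl⟩ := hy
      rw [Finset.mem_range] at hi
      have hyval : ((emb i : ℕ) : ℝ) = (N:ℝ) + 1 + i := by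
        have h0 : (emb i : ℕ) = N + 1 + i := rfl
        rw [h0]; push_cast; ring
      have hiR : (i:ℝ) + 1 ≤ N := by exact_mod_cast hi
      have hY : (0:ℝ) < ((emb i : ℕ):ℝ) := pnat_pos _
      have hSltY : S < ((emb i : ℕ):ℝ) := by rw [hyval]; linarith
      have hY2S : ((emb i : ℕ):ℝ) ≤ 2 * S := by
        rw [hyval]
        have : (N:ℝ) + 1 + i ≤ 2 * N := by linarith
        linarith
      have hSY : (0:ℝ) < S + ((emb i : ℕ):ℝ) := by linarith
      have e1 : (2:ℝ) ^ (-|c|) * S ^ c ≤ ((emb i : ℕ):ℝ) ^ c :=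
        rpow_ratio_ge hY hS0 (by norm_num) (by linarith) (by linarith) c
      have e2 : (3:ℝ) ^ (-|b|) * S ^ (-b) ≤ (S + ((emb i : ℕ):ℝ)) ^ (-b) := by
        have := rpow_ratio_ge (u := S + ((emb i : ℕ):ℝ)) (v := S) (C := 3)
          hSY hS0 (by norm_num) (by linarith) (by linarith) (-b)
        rwa [abs_neg] at this
      rw [div_rpow_eq hSY.le]
      calc κ' * S ^ (c - b) = ((2:ℝ) ^ (-|c|) * S ^ c) * ((3:ℝ) ^ (-|b|) * S ^ (-b)) := by
            rw [hκ'def, show c - b = c + (-b) by ring, Real.rpow_add hS0]; ring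
        _ ≤ ((emb i : ℕ):ℝ) ^ c * (S + ((emb i : ℕ):ℝ)) ^ (-b) := by
            apply mul_le_mul e1 e2 _ (Real.rpow_nonneg hY.le _)
            positivity
    have hsum1 : F.card • (κ' * S ^ (c - b)) ≤ ∑ y ∈ F, ((y:ℕ):ℝ) ^ c / (S + ((y:ℕ):ℝ)) ^ b :=
      Finset.card_nsmul_le_sum F _ _ hterm
    have hsum2 : ∑ y ∈ F, ((y:ℕ):ℝ) ^ c / (S + ((y:ℕ):ℝ)) ^ b
        ≤ ∑' y : ℕ+, ((y:ℕ):ℝ) ^ c / (S + ((y:ℕ):ℝ)) ^ b :=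
      Summable.sum_le_tsum F (fun y _ => hnn y) hts
    rw [hFcard, nsmul_eq_mul] at hsum1
    have hκ'pos : (0:ℝ) < κ' := by rw [hκ'def]; positivity
    have hScb : (0:ℝ) ≤ S ^ (c - b) := Real.rpow_nonneg hS0.le _
    have hhalf : S / 2 ≤ (N:ℝ) := by linarith
    have hkey : (κ' / 2) * S ^ (c + 1 - b) ≤ (N:ℝ) * (κ' * S ^ (c - b)) := by
      have hexp : S ^ (c + 1 - b) = S * S ^ (c - b) := by
        rw [show c + 1 - b = 1 + (c - b) by ring, Real.rpow_add hS0, Real.rpow_one]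
      rw [hexp]
      nlinarith [mul_le_mul_of_nonneg_right hhalf (mul_nonneg hκ'pos.le hScb)]
    rw [max_eq_left hc.le]
    calc κ' / 2 * S ^ (c + 1 - b) ≤ (N:ℝ) * (κ' * S ^ (c - b)) := hkey
      _ ≤ ∑ y ∈ F, ((y:ℕ):ℝ) ^ c / (S + ((y:ℕ):ℝ)) ^ b := hsum1
      _ ≤ _ := hsum2

/-- One-variable peeling step. -/
lemma step_lemma (n : ℕ) (hn : 0 < n) (B : Fin n → ℝ) (c b : ℝ)
    (hcore : ∀ b' : ℝ,
      Summable (fun x : Fin n → ℕ+ =>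
          (∏ j, ((x j : ℕ) : ℝ) ^ (B j)) / (∑ j, ((x j : ℕ) : ℝ)) ^ b')
        ↔ ∀ J : Finset (Fin n), J.Nonempty → ∑ j ∈ J, (B j + 1) < b') :
    Summable (fun p : (Fin n → ℕ+) × ℕ+ =>
        (∏ j, ((p.1 j : ℕ) : ℝ) ^ (B j)) * ((p.2 : ℕ) : ℝ) ^ c /
          ((∑ j, ((p.1 j : ℕ) : ℝ)) + ((p.2 : ℕ) : ℝ)) ^ b)
      ↔ (c + 1 < b ∧ ∀ J : Finset (Fin n), J.Nonempty →
          (∑ j ∈ J, (B j + 1)) + max (c+1) 0 < b) := by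
  set P : (Fin n → ℕ+) → ℝ := fun x => ∏ j, ((x j : ℕ) : ℝ) ^ (B j) with hPdef
  set S : (Fin n → ℕ+) → ℝ := fun x => ∑ j, ((x j : ℕ) : ℝ) with hSdef
  have hP : ∀ x, 0 < P x :=
    fun x => Finset.prod_pos (fun j _ => Real.rpow_pos_of_pos (pnat_pos _) _)
  have hS1 : ∀ x, 1 ≤ S x := by
    intro x
    have h1 : (n:ℝ) ≤ S x := by
      calc (n:ℝ) = ∑ _j : Fin n, (1:ℝ) := by simp
        _ ≤ S x := Finset.sum_le_sum (fun j _ => pnat_one_le _)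
    have h2 : (1:ℝ) ≤ (n:ℝ) := by exact_mod_cast hn
    linarith
  have hS0 : ∀ x, 0 < S x := fun x => lt_of_lt_of_le one_pos (hS1 x)
  have hfun : (fun p : (Fin n → ℕ+) × ℕ+ =>
      (∏ j, ((p.1 j : ℕ) : ℝ) ^ (B j)) * ((p.2 : ℕ) : ℝ) ^ c /
        ((∑ j, ((p.1 j : ℕ) : ℝ)) + ((p.2 : ℕ) : ℝ)) ^ b)
      = fun p => P p.1 * (((p.2 : ℕ) : ℝ) ^ c / (S p.1 + ((p.2 : ℕ) : ℝ)) ^ b) :=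
    funext fun p => (mul_div_assoc _ _ _)
  have hf0 : (0 : (Fin n → ℕ+) × ℕ+ → ℝ)
      ≤ fun p => P p.1 * (((p.2 : ℕ) : ℝ) ^ c / (S p.1 + ((p.2 : ℕ) : ℝ)) ^ b) := by
    intro p
    have hY := pnat_pos p.2
    have hSY : (0:ℝ) < S p.1 + ((p.2 : ℕ) : ℝ) := by linarith [hS0 p.1]
    have := (hP p.1).le
    have h1 : 0 ≤ ((p.2 : ℕ) : ℝ) ^ c / (S p.1 + ((p.2 : ℕ) : ℝ)) ^ b := by positivity
    simpa using mul_nonneg this h1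
  have inner_iff : ∀ x : Fin n → ℕ+,
      (Summable fun y : ℕ+ => P x * (((y : ℕ) : ℝ) ^ c / (S x + ((y : ℕ) : ℝ)) ^ b))
        ↔ c - b < -1 :=
    fun x => (summable_mul_left_iff (hP x).ne').trans (summable_inner (hS0 x).le c b)
  rw [hfun, summable_prod_of_nonneg hf0]
  show ((∀ x : Fin n → ℕ+, Summable fun y : ℕ+ =>
      P x * (((y : ℕ) : ℝ) ^ c / (S x + ((y : ℕ) : ℝ)) ^ b)) ∧
      Summable fun x : Fin n → ℕ+ => ∑' y : ℕ+,
        P x * (((y : ℕ) : ℝ) ^ c / (S x + ((y : ℕ) : ℝ)) ^ b)) ↔ _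
  constructor
  · rintro ⟨hinner, houter⟩
    have hb : c + 1 < b := by
      have := (inner_iff (fun _ => 1)).mp (hinner _)
      linarith
    refine ⟨hb, ?_⟩
    obtain ⟨κ, hκ, hlow⟩ := lowerT b c hb
    have hcomp : Summable (fun x : Fin n → ℕ+ =>
        κ * (P x * (S x) ^ (max (c+1) 0 - b))) := by
      apply Summable.of_nonneg_of_le _ _ houter
      · intro x
        have := (hP x).le
        have h1 : 0 ≤ (S x) ^ (max (c+1) 0 - b) := Real.rpow_nonneg (hS0 x).le _
        positivity
      · intro x
        rw [_root_.tsum_mul_left]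
        have hT0 : κ * (S x) ^ (max (c+1) 0 - b)
            ≤ ∑' y : ℕ+, ((y:ℕ):ℝ) ^ c / (S x + ((y:ℕ):ℝ)) ^ b := hlow (S x) (hS1 x)
        calc κ * (P x * (S x) ^ (max (c+1) 0 - b))
            = P x * (κ * (S x) ^ (max (c+1) 0 - b)) := by ring
          _ ≤ P x * ∑' y : ℕ+, ((y:ℕ):ℝ) ^ c / (S x + ((y:ℕ):ℝ)) ^ b :=
              mul_le_mul_of_nonneg_left hT0 (hP x).le
    have hcomp2 : Summable (fun x : Fin n → ℕ+ => P x * (S x) ^ (max (c+1) 0 - b)) :=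
      (summable_mul_left_iff hκ.ne').mp hcomp
    have hform : (fun x : Fin n → ℕ+ => P x / (S x) ^ (b - max (c+1) 0))
        = fun x : Fin n → ℕ+ => P x * (S x) ^ (max (c+1) 0 - b) := by
      funext x
      rw [div_rpow_eq (hS0 x).le, neg_sub]
    have hcrit := (hcore (b - max (c+1) 0)).mp (by rw [hform]; exact hcomp2)
    intro J hJ
    have := hcrit J hJ
    linarith
  · rintro ⟨hb, hJ⟩
    -- choose ε with room to spare
    set T : Finset (Finset (Fin n)) :=
      Finset.univ.filter (fun J : Finset (Fin n) => J.Nonempty) with hTdef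
    have hTne : T.Nonempty := by
      refine ⟨{⟨0, hn⟩}, ?_⟩
      rw [hTdef, Finset.mem_filter]
      exact ⟨Finset.mem_univ _, Finset.singleton_nonempty _⟩
    set δ : ℝ := T.sup' hTne (fun J => (∑ j ∈ J, (B j + 1)) + max (c+1) 0) with hδdef
    have hδb : δ < b := by
      rw [hδdef, Finset.sup'_lt_iff]
      intro J hJT
      rw [hTdef, Finset.mem_filter] at hJT
      exact hJ J hJT.2
    set ε : ℝ := (b - δ) / 2 with hεdef
    have hε : 0 < ε := by rw [hεdef]; linarith
    have hcrit : ∀ J : Finset (Fin n), J.Nonempty →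
        ∑ j ∈ J, (B j + 1) < b - max (c+1) 0 - ε := by
      intro J hJne
      have hmem : J ∈ T := by
        rw [hTdef, Finset.mem_filter]
        exact ⟨Finset.mem_univ _, hJne⟩
      have hle : (∑ j ∈ J, (B j + 1)) + max (c+1) 0 ≤ δ := by
        rw [hδdef]
        exact Finset.le_sup' (fun J => (∑ j ∈ J, (B j + 1)) + max (c+1) 0) hmem
      rw [hεdef]
      linarith
    refine ⟨fun x => (inner_iff x).mpr (by linarith), ?_⟩
    obtain ⟨K, hK, hup⟩ := upperT b c ε hε hb
    have hform : (fun x : Fin n → ℕ+ => P x / (S x) ^ (b - max (c+1) 0 - ε))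
        = fun x : Fin n → ℕ+ => P x * (S x) ^ (max (c+1) 0 + ε - b) := by
      funext x
      rw [div_rpow_eq (hS0 x).le, show -(b - max (c+1) 0 - ε) = max (c+1) 0 + ε - b by ring]
    have hdom0 : Summable (fun x : Fin n → ℕ+ => P x * (S x) ^ (max (c+1) 0 + ε - b)) := by
      rw [← hform]
      exact (hcore (b - max (c+1) 0 - ε)).mpr hcrit
    have hdom : Summable (fun x : Fin n → ℕ+ =>
        K * (P x * (S x) ^ (max (c+1) 0 + ε - b))) := hdom0.mul_left _
    apply Summable.of_nonneg_of_le _ _ hdom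
    · intro x
      apply tsum_nonneg
      intro y
      have hY := pnat_pos y
      have hSY : (0:ℝ) < S x + ((y:ℕ):ℝ) := by linarith [hS0 x]
      have := (hP x).le
      positivity
    · intro x
      rw [_root_.tsum_mul_left]
      calc P x * ∑' y : ℕ+, ((y:ℕ):ℝ) ^ c / (S x + ((y:ℕ):ℝ)) ^ b
          ≤ P x * (K * (S x) ^ (max (c+1) 0 + ε - b)) :=
            mul_le_mul_of_nonneg_left (hup (S x) (hS1 x)) (hP x).le
        _ = K * (P x * (S x) ^ (max (c+1) 0 + ε - b)) := by ring

lemma crit_translate (m : ℕ) (B : Fin (m+1) → ℝ) (b : ℝ) :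
    ((B (Fin.last m) + 1 < b) ∧ ∀ J : Finset (Fin m), J.Nonempty →
        (∑ j ∈ J, (B j.castSucc + 1)) + max (B (Fin.last m) + 1) 0 < b)
      ↔ (∀ J : Finset (Fin (m+1)), J.Nonempty → ∑ j ∈ J, (B j + 1) < b) := by
  classical
  constructor
  · rintro ⟨h0, hJ⟩ J hJne
    set J' : Finset (Fin m) := Finset.univ.filter (fun i => i.castSucc ∈ J) with hJ'def
    have hsum : ∑ j ∈ J, (B j + 1)
        = (∑ i ∈ J', (B i.castSucc + 1))
          + (if Fin.last m ∈ J then B (Fin.last m) + 1 else 0) := by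
      have e1 : ∑ j ∈ J, (B j + 1)
          = ∑ j : Fin (m+1), (if j ∈ J then B j + 1 else 0) := by
        rw [Finset.sum_ite_mem, Finset.univ_inter]
      rw [e1, Fin.sum_univ_castSucc]
      congr 1
      rw [hJ'def, Finset.sum_filter]
    by_cases hlast : Fin.last m ∈ J
    · by_cases hne' : J'.Nonempty
      · have h1 := hJ J' hne'
        have h2 : B (Fin.last m) + 1 ≤ max (B (Fin.last m) + 1) 0 := le_max_left _ _
        rw [hsum, if_pos hlast]
        linarith
      · rw [Finset.not_nonempty_iff_eq_empty] at hne'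
        rw [hsum, if_pos hlast, hne', Finset.sum_empty]
        linarith
    · by_cases hne' : J'.Nonempty
      · have h1 := hJ J' hne'
        have h2 : (0:ℝ) ≤ max (B (Fin.last m) + 1) 0 := le_max_right _ _
        rw [hsum, if_neg hlast]
        linarith
      · exfalso
        obtain ⟨j, hj⟩ := hJne
        rcases Fin.eq_castSucc_or_eq_last j with ⟨i, rfl⟩ | rfl
        · exact hne' ⟨i, by rw [hJ'def, Finset.mem_filter]; exact ⟨Finset.mem_univ _, hj⟩⟩
        · exact hlast hj
  · intro h
    constructor
    · have := h {Fin.last m} (Finset.singleton_nonempty _)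
      simpa using this
    · intro J' hne
      set e : Fin m ↪ Fin (m+1) := ⟨Fin.castSucc, Fin.castSucc_injective m⟩ with hedef
      have hmapne : (J'.map e).Nonempty := by
        obtain ⟨a, ha⟩ := hne
        exact ⟨e a, Finset.mem_map_of_mem _ ha⟩
      rcases le_or_gt (B (Fin.last m) + 1) 0 with hc | hc
      · rw [max_eq_right hc, add_zero]
        have := h (J'.map e) hmapne
        rw [Finset.sum_map] at this
        simpa [hedef] using this
      · rw [max_eq_left hc.le]
        have hnomem : Fin.last m ∉ J'.map e := by
          rw [Finset.mem_map]
          rintro ⟨a, _, ha⟩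
          simp only [hedef, Function.Embedding.coeFn_mk] at ha
          exact (Fin.castSucc_lt_last a).ne ha
        have := h (insert (Fin.last m) (J'.map e)) (Finset.insert_nonempty _ _)
        rw [Finset.sum_insert hnomem, Finset.sum_map] at this
        simp only [hedef, Function.Embedding.coeFn_mk] at this
        linarith

/-- The core criterion for higher zeta series. -/
theorem core_criterion : ∀ (n : ℕ) (B : Fin n → ℝ) (b : ℝ),
    Summable (fun x : Fin n → ℕ+ =>
        (∏ j, ((x j : ℕ) : ℝ) ^ (B j)) / (∑ j, ((x j : ℕ) : ℝ)) ^ b)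
      ↔ ∀ J : Finset (Fin n), J.Nonempty → ∑ j ∈ J, (B j + 1) < b := by
  intro n
  induction n with
  | zero =>
    intro B b
    constructor
    · intro _ J hJ
      obtain ⟨j, _⟩ := hJ
      exact j.elim0
    · intro _
      exact Summable.of_finite
  | succ n IH =>
    intro B b
    rcases Nat.eq_zero_or_pos n with rfl | hn
    · -- single variable case
      set E : ℕ+ ≃ (Fin 1 → ℕ+) :=
        { toFun := fun y => fun _ => y
          invFun := fun x => x 0
          left_inv := fun y => rfl
          right_inv := fun x => funext fun j => by rw [Fin.fin_one_eq_zero j] } with hEdef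
      rw [← E.summable_iff]
      have hfun : ((fun x : Fin 1 → ℕ+ =>
          (∏ j, ((x j : ℕ) : ℝ) ^ (B j)) / (∑ j, ((x j : ℕ) : ℝ)) ^ b) ∘ E)
          = fun y : ℕ+ => ((y : ℕ) : ℝ) ^ (B 0 - b) := by
        funext y
        have hY := pnat_pos y
        simp only [Function.comp_apply, hEdef, Equiv.coe_fn_mk,
          Fin.prod_univ_one, Fin.sum_univ_one]
        rw [Real.rpow_sub hY]
      rw [hfun, summable_pnat_rpow]
      constructor
      · intro h J hJne
        have hJ0 : J = {0} := by
          apply Finset.eq_singleton_iff_nonempty_unique_mem.mpr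
          exact ⟨hJne, fun x _ => Fin.fin_one_eq_zero x⟩
        rw [hJ0, Finset.sum_singleton]
        linarith
      · intro h
        have := h {0} (Finset.singleton_nonempty _)
        rw [Finset.sum_singleton] at this
        linarith
    · -- peel the last variable
      set E : ((Fin n → ℕ+) × ℕ+) ≃ (Fin (n+1) → ℕ+) :=
        { toFun := fun p => Fin.snoc p.1 p.2
          invFun := fun x => (Fin.init x, x (Fin.last n))
          left_inv := fun p => by simp [Fin.init_snoc, Fin.snoc_last]
          right_inv := fun x => by simp [Fin.snoc_init_self] } with hEdef
      rw [← E.summable_iff]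
      have hfun : ((fun x : Fin (n+1) → ℕ+ =>
          (∏ j, ((x j : ℕ) : ℝ) ^ (B j)) / (∑ j, ((x j : ℕ) : ℝ)) ^ b) ∘ E)
          = fun p : (Fin n → ℕ+) × ℕ+ =>
            (∏ j, ((p.1 j : ℕ) : ℝ) ^ ((fun i : Fin n => B i.castSucc) j))
              * ((p.2 : ℕ) : ℝ) ^ (B (Fin.last n)) /
              ((∑ j, ((p.1 j : ℕ) : ℝ)) + ((p.2 : ℕ) : ℝ)) ^ b := by
        funext p
        simp only [Function.comp_apply, hEdef, Equiv.coe_fn_mk,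
          Fin.prod_univ_castSucc, Fin.sum_univ_castSucc, Fin.snoc_castSucc, Fin.snoc_last]
      rw [hfun, step_lemma n hn (fun i : Fin n => B i.castSucc) (B (Fin.last n)) b
        (fun b' => IH (fun i : Fin n => B i.castSucc) b')]
      exact crit_translate n B b

instance fiber_finite (k n : ℕ) : Finite {y : Fin k → ℕ+ // (∑ j, ((y j : ℕ))) = n} := by
  have hb : ∀ (y : {y : Fin k → ℕ+ // (∑ j, ((y j : ℕ))) = n}) (i : Fin k),
      ((y.1 i : ℕ)) < n + 1 := by
    intro y i
    have h1 : ((y.1 i : ℕ)) ≤ ∑ j, ((y.1 j : ℕ)) :=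
      Finset.single_le_sum (f := fun j => ((y.1 j : ℕ))) (fun j _ => Nat.zero_le _)
        (Finset.mem_univ i)
    rw [y.2] at h1
    omega
  apply Finite.of_injective (fun y => (fun i => (⟨(y.1 i : ℕ), hb y i⟩ : Fin (n+1))))
  intro y y' h
  apply Subtype.ext
  funext i
  have h2 := congrFun h i
  simp only [Fin.mk.injEq] at h2
  exact PNat.coe_injective h2

lemma fiber_card_zero (k' : ℕ) :
    Nat.card {y : Fin (k'+1) → ℕ+ // (∑ j, ((y j : ℕ))) = 0} = 0 := by
  have : IsEmpty {y : Fin (k'+1) → ℕ+ // (∑ j, ((y j : ℕ))) = 0} := by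
    constructor
    rintro ⟨y, hy⟩
    have h1 : ((y (Fin.last k') : ℕ)) ≤ ∑ j, ((y j : ℕ)) :=
      Finset.single_le_sum (f := fun j => ((y j : ℕ))) (fun j _ => Nat.zero_le _)
        (Finset.mem_univ _)
    rw [hy] at h1
    have := (y (Fin.last k')).pos
    omega
  exact Nat.card_of_isEmpty

lemma fiber_tsum (k : ℕ) (F : ℕ → ℝ≥0∞) :
    ∑' y : Fin k → ℕ+, F (∑ j, ((y j : ℕ))) =
      ∑' n : ℕ, (Nat.card {y : Fin k → ℕ+ // (∑ j, ((y j : ℕ))) = n}) * F n := by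
  classical
  set s : (Fin k → ℕ+) → ℕ := fun y => ∑ j, ((y j : ℕ)) with hsdef
  calc ∑' y : Fin k → ℕ+, F (s y)
      = ∑' p : Σ n : ℕ, {y : Fin k → ℕ+ // s y = n}, F (s ((Equiv.sigmaFiberEquiv s) p)) :=
        ((Equiv.sigmaFiberEquiv s).tsum_eq (fun y => F (s y))).symm
    _ = ∑' p : Σ n : ℕ, {y : Fin k → ℕ+ // s y = n}, F p.1 := by
        apply tsum_congr
        rintro ⟨n, y, hy⟩
        simp only [Equiv.sigmaFiberEquiv, Equiv.coe_fn_mk]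
        rw [hy]
    _ = ∑' n : ℕ, ∑' _y : {y : Fin k → ℕ+ // s y = n}, F n := ENNReal.tsum_sigma (fun n (_ : {y : Fin k → ℕ+ // s y = n}) => F n)
    _ = ∑' n : ℕ, (Nat.card {y : Fin k → ℕ+ // s y = n}) * F n := by
        apply tsum_congr
        intro n
        haveI := Fintype.ofFinite {y : Fin k → ℕ+ // s y = n}
        rw [tsum_fintype, Finset.sum_const, Nat.card_eq_fintype_card, Finset.card_univ,
          nsmul_eq_mul]

lemma card_fiber_le (k' n : ℕ) :
    Nat.card {y : Fin (k'+1) → ℕ+ // (∑ j, ((y j : ℕ))) = n} ≤ n ^ k' := by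
  classical
  rcases Nat.eq_zero_or_pos n with rfl | hn
  · rw [fiber_card_zero]
    exact Nat.zero_le _
  · have hble : ∀ (y : {y : Fin (k'+1) → ℕ+ // (∑ j, ((y j : ℕ))) = n}) (i : Fin (k'+1)),
        ((y.1 i : ℕ)) ≤ n := by
      intro y i
      have h1 : ((y.1 i : ℕ)) ≤ ∑ j, ((y.1 j : ℕ)) :=
        Finset.single_le_sum (f := fun j => ((y.1 j : ℕ))) (fun j _ => Nat.zero_le _)
          (Finset.mem_univ i)
      rw [y.2] at h1
      exact h1
    have hinj : Function.Injective
        (fun (y : {y : Fin (k'+1) → ℕ+ // (∑ j, ((y j : ℕ))) = n}) =>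
          (fun i : Fin k' => (⟨(y.1 i.castSucc : ℕ) - 1, by
            have h1 := hble y i.castSucc
            have h2 := (y.1 i.castSucc).pos
            omega⟩ : Fin n))) := by
      intro y y' h
      have hcast : ∀ i : Fin k', ((y.1 i.castSucc : ℕ)) = ((y'.1 i.castSucc : ℕ)) := by
        intro i
        have h2 := congrFun h i
        simp only [Fin.mk.injEq] at h2
        have h3 := (y.1 i.castSucc).pos
        have h4 := (y'.1 i.castSucc).pos
        omega
      have hsums := y.2
      have hsums' := y'.2
      rw [Fin.sum_univ_castSucc] at hsums hsums'
      have hsumeq : ∑ i : Fin k', ((y.1 i.castSucc : ℕ)) = ∑ i : Fin k', ((y'.1 i.castSucc : ℕ)) :=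
        Finset.sum_congr rfl (fun i _ => hcast i)
      have hlast : ((y.1 (Fin.last k') : ℕ)) = ((y'.1 (Fin.last k') : ℕ)) := by omega
      apply Subtype.ext
      funext i
      refine Fin.lastCases ?_ ?_ i
      · exact PNat.coe_injective hlast
      · intro j
        exact PNat.coe_injective (hcast j)
    calc Nat.card {y : Fin (k'+1) → ℕ+ // (∑ j, ((y j : ℕ))) = n}
        ≤ Nat.card (Fin k' → Fin n) := Nat.card_le_card_of_injective _ hinj
      _ = n ^ k' := by simp [Nat.card_eq_fintype_card]

lemma le_card_fiber (k' n : ℕ) (hn : 0 < n) :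
    n ^ k' ≤ Nat.card {y : Fin (k'+1) → ℕ+ // (∑ j, ((y j : ℕ))) = (k'+1) * n} := by
  classical
  have hsle : ∀ g : Fin k' → Fin n, (∑ i : Fin k', ((g i : ℕ) + 1)) ≤ k' * n := by
    intro g
    calc ∑ i : Fin k', ((g i : ℕ) + 1) ≤ ∑ _i : Fin k', n :=
          Finset.sum_le_sum (fun i _ => Nat.succ_le_of_lt (g i).2)
      _ = k' * n := by simp [Finset.sum_const, mul_comm]
  have hrem : ∀ g : Fin k' → Fin n, 0 < (k'+1) * n - ∑ i : Fin k', ((g i : ℕ) + 1) := by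
    intro g
    have h1 := hsle g
    have h2 : k' * n < (k'+1) * n := by nlinarith
    omega
  set f : (Fin k' → Fin n) → (Fin (k'+1) → ℕ+) := fun g =>
    Fin.snoc (fun i => Nat.toPNat ((g i : ℕ) + 1) (Nat.succ_pos _))
      (Nat.toPNat ((k'+1) * n - ∑ i : Fin k', ((g i : ℕ) + 1)) (hrem g)) with hfdef
  have hf : ∀ g, (∑ j, ((f g j : ℕ))) = (k'+1) * n := by
    intro g
    rw [Fin.sum_univ_castSucc]
    simp only [hfdef, Fin.snoc_castSucc, Fin.snoc_last]
    have h1 := hsle g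
    have h2 : k' * n < (k'+1) * n := by nlinarith
    show (∑ i : Fin k', ((g i : ℕ) + 1)) + ((k'+1) * n - ∑ i : Fin k', ((g i : ℕ) + 1))
        = (k'+1) * n
    omega
  have hinj : Function.Injective
      (fun g : Fin k' → Fin n =>
        (⟨f g, hf g⟩ : {y : Fin (k'+1) → ℕ+ // (∑ j, ((y j : ℕ))) = (k'+1) * n})) := by
    intro g g' h
    have h1 : f g = f g' := congrArg Subtype.val h
    funext i
    have h2 := congrFun h1 i.castSucc
    simp only [hfdef, Fin.snoc_castSucc] at h2
    have h3 : (g i : ℕ) + 1 = (g' i : ℕ) + 1 := congrArg (fun z : ℕ+ => (z : ℕ)) h2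
    exact Fin.ext (by omega)
  calc n ^ k' = Nat.card (Fin k' → Fin n) := by simp [Nat.card_eq_fintype_card]
    _ ≤ _ := Nat.card_le_card_of_injective _ hinj

lemma block_collapse (m k' : ℕ) (b a : ℝ) (A : Fin m → ℝ) :
    Summable (fun i : (Fin m → ℕ+) × (Fin (k'+1) → ℕ+) =>
        (∏ j, ((i.1 j : ℕ) : ℝ) ^ (A j)) * (∑ j, ((i.2 j : ℕ) : ℝ)) ^ a /
          ((∑ j, ((i.1 j : ℕ) : ℝ)) + ∑ j, ((i.2 j : ℕ) : ℝ)) ^ b) ↔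
      Summable (fun i : (Fin m → ℕ+) × ℕ+ =>
        (∏ j, ((i.1 j : ℕ) : ℝ) ^ (A j)) * ((i.2 : ℕ) : ℝ) ^ (a + ((k'+1 : ℕ) : ℝ) - 1) /
          ((∑ j, ((i.1 j : ℕ) : ℝ)) + ((i.2 : ℕ) : ℝ)) ^ b) := by
  classical
  set P : (Fin m → ℕ+) → ℝ := fun x => ∏ j, ((x j : ℕ) : ℝ) ^ (A j) with hPdef
  set S : (Fin m → ℕ+) → ℝ := fun x => ∑ j, ((x j : ℕ) : ℝ) with hSdef
  have hP0 : ∀ x, 0 ≤ P x :=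
    fun x => Finset.prod_nonneg fun j _ => Real.rpow_nonneg (pnat_pos _).le _
  have hS0 : ∀ x, 0 ≤ S x := fun x => Finset.sum_nonneg fun j _ => (pnat_pos _).le
  set G : (Fin m → ℕ+) → ℕ → ℝ := fun x n => P x * (n : ℝ) ^ a / (S x + (n : ℝ)) ^ b with hGdef
  set G2 : (Fin m → ℕ+) → ℕ+ → ℝ := fun x n =>
    P x * ((n : ℕ) : ℝ) ^ (a + ((k'+1 : ℕ) : ℝ) - 1) / (S x + ((n : ℕ) : ℝ)) ^ b with hG2def
  have hG0 : ∀ x n, 0 ≤ G x n := by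
    intro x n
    have h1 := hP0 x
    have h2 := hS0 x
    have h3 : (0:ℝ) ≤ (n:ℝ) := Nat.cast_nonneg n
    apply div_nonneg (mul_nonneg h1 (Real.rpow_nonneg h3 _)) (Real.rpow_nonneg (by linarith) _)
  have hG20 : ∀ x n, 0 ≤ G2 x n := by
    intro x n
    have h1 := hP0 x
    have h2 := hS0 x
    have h3 : (0:ℝ) ≤ ((n:ℕ):ℝ) := (pnat_pos n).le
    apply div_nonneg (mul_nonneg h1 (Real.rpow_nonneg h3 _)) (Real.rpow_nonneg (by linarith) _)
  have hnn1 : ∀ p : (Fin m → ℕ+) × (Fin (k'+1) → ℕ+),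
      0 ≤ (∏ j, ((p.1 j : ℕ) : ℝ) ^ (A j)) * (∑ j, ((p.2 j : ℕ) : ℝ)) ^ a /
        ((∑ j, ((p.1 j : ℕ) : ℝ)) + ∑ j, ((p.2 j : ℕ) : ℝ)) ^ b := by
    intro p
    have h1 := hP0 p.1
    have h2 := hS0 p.1
    have h3 : (0:ℝ) ≤ ∑ j, ((p.2 j : ℕ) : ℝ) := Finset.sum_nonneg fun j _ => (pnat_pos _).le
    exact div_nonneg (mul_nonneg h1 (Real.rpow_nonneg h3 _)) (Real.rpow_nonneg (by linarith) _)
  have hnn2 : ∀ p : (Fin m → ℕ+) × ℕ+,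
      0 ≤ (∏ j, ((p.1 j : ℕ) : ℝ) ^ (A j)) * ((p.2 : ℕ) : ℝ) ^ (a + ((k'+1 : ℕ) : ℝ) - 1) /
        ((∑ j, ((p.1 j : ℕ) : ℝ)) + ((p.2 : ℕ) : ℝ)) ^ b :=
    fun p => hG20 p.1 p.2
  rw [summable_iff_ofReal_ne_top hnn1, summable_iff_ofReal_ne_top hnn2]
  have hF1x : ∀ (x : Fin m → ℕ+) (y : Fin (k'+1) → ℕ+),
      (∏ j, ((x j : ℕ) : ℝ) ^ (A j)) * (∑ j, ((y j : ℕ) : ℝ)) ^ a /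
        ((∑ j, ((x j : ℕ) : ℝ)) + ∑ j, ((y j : ℕ) : ℝ)) ^ b
      = G x (∑ j, ((y j : ℕ))) := by
    intro x y
    show P x * (∑ j, ((y j : ℕ) : ℝ)) ^ a / (S x + ∑ j, ((y j : ℕ) : ℝ)) ^ b = _
    rw [show (∑ j, ((y j : ℕ) : ℝ)) = (((∑ j, ((y j : ℕ))) : ℕ) : ℝ) from by push_cast; rfl]
  have hA : ∑' p : (Fin m → ℕ+) × (Fin (k'+1) → ℕ+),
      ENNReal.ofReal ((∏ j, ((p.1 j : ℕ) : ℝ) ^ (A j)) * (∑ j, ((p.2 j : ℕ) : ℝ)) ^ a /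
        ((∑ j, ((p.1 j : ℕ) : ℝ)) + ∑ j, ((p.2 j : ℕ) : ℝ)) ^ b)
      = ∑' x : Fin m → ℕ+, ∑' n : ℕ,
          (Nat.card {y : Fin (k'+1) → ℕ+ // (∑ j, ((y j : ℕ))) = n} : ℝ≥0∞) *
            ENNReal.ofReal (G x n) := by
    rw [ENNReal.tsum_prod']
    apply tsum_congr
    intro x
    have hre : (fun y : Fin (k'+1) → ℕ+ =>
        ENNReal.ofReal ((∏ j, ((x j : ℕ) : ℝ) ^ (A j)) * (∑ j, ((y j : ℕ) : ℝ)) ^ a /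
          ((∑ j, ((x j : ℕ) : ℝ)) + ∑ j, ((y j : ℕ) : ℝ)) ^ b))
        = fun y : Fin (k'+1) → ℕ+ =>
            (fun n : ℕ => ENNReal.ofReal (G x n)) (∑ j, ((y j : ℕ))) :=
      funext fun y => congrArg ENNReal.ofReal (hF1x x y)
    rw [hre]
    exact fiber_tsum (k'+1) (fun nn : ℕ => ENNReal.ofReal (G x nn))
  have hB : ∑' p : (Fin m → ℕ+) × ℕ+,
      ENNReal.ofReal ((∏ j, ((p.1 j : ℕ) : ℝ) ^ (A j)) * ((p.2 : ℕ) : ℝ) ^ (a + ((k'+1 : ℕ) : ℝ) - 1) /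
        ((∑ j, ((p.1 j : ℕ) : ℝ)) + ((p.2 : ℕ) : ℝ)) ^ b)
      = ∑' x : Fin m → ℕ+, ∑' n : ℕ+, ENNReal.ofReal (G2 x n) := ENNReal.tsum_prod'
  have hCle : ∀ x : Fin m → ℕ+,
      (∑' n : ℕ, (Nat.card {y : Fin (k'+1) → ℕ+ // (∑ j, ((y j : ℕ))) = n} : ℝ≥0∞) *
          ENNReal.ofReal (G x n))
        ≤ ∑' n : ℕ+, ENNReal.ofReal (G2 x n) := by
    intro x
    have hinjc : Function.Injective ((↑) : ℕ+ → ℕ) := fun u v huv => PNat.coe_injective huv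
    have hsupp : Function.support (fun nn : ℕ =>
        (Nat.card {y : Fin (k'+1) → ℕ+ // (∑ j, ((y j : ℕ))) = nn} : ℝ≥0∞) *
          ENNReal.ofReal (G x nn)) ⊆ Set.range ((↑) : ℕ+ → ℕ) := by
      intro nn hnn
      rcases Nat.eq_zero_or_pos nn with rfl | hpos
      · refine absurd ?_ hnn
        show (Nat.card {y : Fin (k'+1) → ℕ+ // (∑ j, ((y j : ℕ))) = 0} : ℝ≥0∞) *
          ENNReal.ofReal (G x 0) = 0
        rw [fiber_card_zero k']
        simp
      · exact ⟨⟨nn, hpos⟩, rfl⟩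
    have hrestrict := Function.Injective.tsum_eq
      (f := fun nn : ℕ => (Nat.card {y : Fin (k'+1) → ℕ+ // (∑ j, ((y j : ℕ))) = nn} : ℝ≥0∞) *
          ENNReal.ofReal (G x nn)) hinjc hsupp
    rw [← hrestrict]
    apply ENNReal.tsum_le_tsum
    intro n
    show (Nat.card {y : Fin (k'+1) → ℕ+ // (∑ j, ((y j : ℕ))) = ((n:ℕ))} : ℝ≥0∞) *
        ENNReal.ofReal (G x ((n:ℕ))) ≤ ENNReal.ofReal (G2 x n)
    have hcard : ((Nat.card {y : Fin (k'+1) → ℕ+ // (∑ j, ((y j : ℕ))) = (n:ℕ)} : ℕ) : ℝ≥0∞)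
        ≤ (((n : ℕ) ^ k' : ℕ) : ℝ≥0∞) := by
      exact_mod_cast Nat.cast_le.mpr (card_fiber_le k' (n:ℕ))
    have hN : (0:ℝ) < ((n:ℕ):ℝ) := pnat_pos n
    calc (Nat.card {y : Fin (k'+1) → ℕ+ // (∑ j, ((y j : ℕ))) = (n:ℕ)} : ℝ≥0∞) *
          ENNReal.ofReal (G x (n:ℕ))
        ≤ (((n : ℕ) ^ k' : ℕ) : ℝ≥0∞) * ENNReal.ofReal (G x (n:ℕ)) :=
          mul_le_mul_left hcard _
      _ = ENNReal.ofReal ((((n : ℕ) ^ k' : ℕ) : ℝ) * G x (n:ℕ)) := by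
          rw [ENNReal.ofReal_mul (by positivity), ENNReal.ofReal_natCast]
      _ = ENNReal.ofReal (G2 x n) := by
          congr 1
          have hc : (((n : ℕ) ^ k' : ℕ) : ℝ) = ((n:ℕ):ℝ) ^ (k' : ℕ) := by push_cast; rfl
          rw [hc]
          show ((n:ℕ):ℝ) ^ (k' : ℕ) * (P x * ((n:ℕ):ℝ) ^ a / (S x + ((n:ℕ):ℝ)) ^ b)
            = P x * ((n:ℕ):ℝ) ^ (a + ((k'+1 : ℕ) : ℝ) - 1) / (S x + ((n:ℕ):ℝ)) ^ b
          rw [show a + ((k'+1 : ℕ) : ℝ) - 1 = a + (k' : ℕ) from by push_cast; ring,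
            Real.rpow_add hN, Real.rpow_natCast]
          ring
  have hk1 : (1:ℝ) ≤ ((k'+1 : ℕ) : ℝ) := by exact_mod_cast Nat.succ_le_succ (Nat.zero_le k')
  have hkpos : (0:ℝ) < ((k'+1 : ℕ) : ℝ) := by linarith
  have hDle : ∀ x : Fin m → ℕ+,
      (∑' n : ℕ+, ENNReal.ofReal (G2 x n))
        ≤ ENNReal.ofReal (((k'+1 : ℕ) : ℝ) ^ (|a| + |b|)) *
          ∑' nn : ℕ, (Nat.card {y : Fin (k'+1) → ℕ+ // (∑ j, ((y j : ℕ))) = nn} : ℝ≥0∞) *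
            ENNReal.ofReal (G x nn) := by
    intro x
    have hterm : ∀ n : ℕ+, ENNReal.ofReal (G2 x n)
        ≤ ENNReal.ofReal (((k'+1 : ℕ) : ℝ) ^ (|a| + |b|)) *
          ((Nat.card {y : Fin (k'+1) → ℕ+ // (∑ j, ((y j : ℕ))) = (k'+1) * (n:ℕ)} : ℝ≥0∞) *
            ENNReal.ofReal (G x ((k'+1) * (n:ℕ)))) := by
      intro n
      have hN : (0:ℝ) < ((n:ℕ):ℝ) := pnat_pos n
      have hKN : (((k'+1) * (n:ℕ) : ℕ) : ℝ) = ((k'+1 : ℕ) : ℝ) * ((n:ℕ):ℝ) := by push_cast; ring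
      have hSx := hS0 x
      have hKNpos : (0:ℝ) < (((k'+1) * (n:ℕ) : ℕ) : ℝ) := by rw [hKN]; positivity
      have h2 : ((n:ℕ):ℝ) ^ a ≤ ((k'+1 : ℕ) : ℝ) ^ |a| * (((k'+1) * (n:ℕ) : ℕ) : ℝ) ^ a := by
        refine rpow_le_ratio hN hk1 ?_ ?_ a
        · rw [hKN]; nlinarith
        · rw [hKN]
      have h3 : (S x + ((n:ℕ):ℝ)) ^ (-b)
          ≤ ((k'+1 : ℕ) : ℝ) ^ |b| * (S x + (((k'+1) * (n:ℕ) : ℕ) : ℝ)) ^ (-b) := by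
        have := rpow_le_ratio (u := S x + ((n:ℕ):ℝ)) (v := S x + (((k'+1) * (n:ℕ) : ℕ) : ℝ))
          (C := ((k'+1 : ℕ) : ℝ)) (by linarith) hk1 (by rw [hKN]; nlinarith) (by rw [hKN]; nlinarith) (-b)
        rwa [abs_neg] at this
      have h4 : ((n:ℕ):ℝ) ^ (k' : ℕ)
          ≤ ((Nat.card {y : Fin (k'+1) → ℕ+ // (∑ j, ((y j : ℕ))) = (k'+1) * (n:ℕ)} : ℕ) : ℝ) := by
        have := le_card_fiber k' (n:ℕ) n.pos
        have h5 : (((n:ℕ) ^ k' : ℕ) : ℝ) ≤ _ := Nat.cast_le.mpr this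
        calc ((n:ℕ):ℝ) ^ (k' : ℕ) = (((n:ℕ) ^ k' : ℕ) : ℝ) := by push_cast; rfl
          _ ≤ _ := h5
      -- real inequality
      have hreal : G2 x n
          ≤ ((k'+1 : ℕ) : ℝ) ^ (|a| + |b|) *
            (((Nat.card {y : Fin (k'+1) → ℕ+ // (∑ j, ((y j : ℕ))) = (k'+1) * (n:ℕ)} : ℕ) : ℝ) *
              G x ((k'+1) * (n:ℕ))) := by
        have e1 : G2 x n = P x * (((n:ℕ):ℝ) ^ a * ((n:ℕ):ℝ) ^ (k' : ℕ)) *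
            (S x + ((n:ℕ):ℝ)) ^ (-b) := by
          show P x * ((n:ℕ):ℝ) ^ (a + ((k'+1 : ℕ) : ℝ) - 1) / (S x + ((n:ℕ):ℝ)) ^ b = _
          rw [div_rpow_eq (by linarith), show a + ((k'+1 : ℕ) : ℝ) - 1 = a + (k' : ℕ) from by
            push_cast; ring, Real.rpow_add hN, Real.rpow_natCast]
        have e2 : G x ((k'+1) * (n:ℕ)) = P x * (((k'+1) * (n:ℕ) : ℕ) : ℝ) ^ a *
            (S x + (((k'+1) * (n:ℕ) : ℕ) : ℝ)) ^ (-b) := by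
          show P x * (((k'+1) * (n:ℕ) : ℕ) : ℝ) ^ a / (S x + (((k'+1) * (n:ℕ) : ℕ) : ℝ)) ^ b = _
          rw [div_rpow_eq (by linarith)]
        rw [e1, e2]
        have hmul : (((n:ℕ):ℝ) ^ a * ((n:ℕ):ℝ) ^ (k' : ℕ)) * (S x + ((n:ℕ):ℝ)) ^ (-b)
            ≤ ((((k'+1 : ℕ) : ℝ) ^ |a| * (((k'+1) * (n:ℕ) : ℕ) : ℝ) ^ a) *
                ((Nat.card {y : Fin (k'+1) → ℕ+ // (∑ j, ((y j : ℕ))) = (k'+1) * (n:ℕ)} : ℕ) : ℝ)) *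
              (((k'+1 : ℕ) : ℝ) ^ |b| * (S x + (((k'+1) * (n:ℕ) : ℕ) : ℝ)) ^ (-b)) := by
          apply mul_le_mul
          · apply mul_le_mul h2 h4 (by positivity)
            positivity
          · exact h3
          · positivity
          · positivity
        have hP' := hP0 x
        calc P x * (((n:ℕ):ℝ) ^ a * ((n:ℕ):ℝ) ^ (k' : ℕ)) * (S x + ((n:ℕ):ℝ)) ^ (-b)
            = P x * ((((n:ℕ):ℝ) ^ a * ((n:ℕ):ℝ) ^ (k' : ℕ)) * (S x + ((n:ℕ):ℝ)) ^ (-b)) := by ring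
          _ ≤ P x * (((((k'+1 : ℕ) : ℝ) ^ |a| * (((k'+1) * (n:ℕ) : ℕ) : ℝ) ^ a) *
                ((Nat.card {y : Fin (k'+1) → ℕ+ // (∑ j, ((y j : ℕ))) = (k'+1) * (n:ℕ)} : ℕ) : ℝ)) *
              (((k'+1 : ℕ) : ℝ) ^ |b| * (S x + (((k'+1) * (n:ℕ) : ℕ) : ℝ)) ^ (-b))) :=
              mul_le_mul_of_nonneg_left hmul hP'
          _ = ((k'+1 : ℕ) : ℝ) ^ (|a| + |b|) *
              (((Nat.card {y : Fin (k'+1) → ℕ+ // (∑ j, ((y j : ℕ))) = (k'+1) * (n:ℕ)} : ℕ) : ℝ) *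
                (P x * (((k'+1) * (n:ℕ) : ℕ) : ℝ) ^ a *
                  (S x + (((k'+1) * (n:ℕ) : ℕ) : ℝ)) ^ (-b))) := by
              rw [Real.rpow_add hkpos]; ring
      calc ENNReal.ofReal (G2 x n)
          ≤ ENNReal.ofReal (((k'+1 : ℕ) : ℝ) ^ (|a| + |b|) *
            (((Nat.card {y : Fin (k'+1) → ℕ+ // (∑ j, ((y j : ℕ))) = (k'+1) * (n:ℕ)} : ℕ) : ℝ) *
              G x ((k'+1) * (n:ℕ)))) := ENNReal.ofReal_le_ofReal hreal
        _ = ENNReal.ofReal (((k'+1 : ℕ) : ℝ) ^ (|a| + |b|)) *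
            ((Nat.card {y : Fin (k'+1) → ℕ+ // (∑ j, ((y j : ℕ))) = (k'+1) * (n:ℕ)} : ℝ≥0∞) *
              ENNReal.ofReal (G x ((k'+1) * (n:ℕ)))) := by
            rw [ENNReal.ofReal_mul (by positivity), ENNReal.ofReal_mul (by positivity),
              ENNReal.ofReal_natCast]
    calc (∑' n : ℕ+, ENNReal.ofReal (G2 x n))
        ≤ ∑' n : ℕ+, ENNReal.ofReal (((k'+1 : ℕ) : ℝ) ^ (|a| + |b|)) *
            ((Nat.card {y : Fin (k'+1) → ℕ+ // (∑ j, ((y j : ℕ))) = (k'+1) * (n:ℕ)} : ℝ≥0∞) *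
              ENNReal.ofReal (G x ((k'+1) * (n:ℕ)))) := ENNReal.tsum_le_tsum hterm
      _ = ENNReal.ofReal (((k'+1 : ℕ) : ℝ) ^ (|a| + |b|)) *
          ∑' n : ℕ+, (fun nn : ℕ =>
            (Nat.card {y : Fin (k'+1) → ℕ+ // (∑ j, ((y j : ℕ))) = nn} : ℝ≥0∞) *
              ENNReal.ofReal (G x nn)) ((k'+1) * (n:ℕ)) := ENNReal.tsum_mul_left
      _ ≤ ENNReal.ofReal (((k'+1 : ℕ) : ℝ) ^ (|a| + |b|)) *
          ∑' nn : ℕ, (Nat.card {y : Fin (k'+1) → ℕ+ // (∑ j, ((y j : ℕ))) = nn} : ℝ≥0∞) *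
            ENNReal.ofReal (G x nn) := by
          apply mul_le_mul_right
          apply ENNReal.tsum_comp_le_tsum_of_injective
          intro u v huv
          have : (k'+1) * (u:ℕ) = (k'+1) * (v:ℕ) := huv
          exact PNat.coe_injective (Nat.eq_of_mul_eq_mul_left (Nat.succ_pos k') this)
  rw [hA, hB]
  constructor
  · intro h1
    have hle : (∑' x : Fin m → ℕ+, ∑' n : ℕ+, ENNReal.ofReal (G2 x n))
        ≤ ENNReal.ofReal (((k'+1 : ℕ) : ℝ) ^ (|a| + |b|)) *
          ∑' x : Fin m → ℕ+, ∑' nn : ℕ,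
            (Nat.card {y : Fin (k'+1) → ℕ+ // (∑ j, ((y j : ℕ))) = nn} : ℝ≥0∞) *
              ENNReal.ofReal (G x nn) := by
      calc _ ≤ ∑' x : Fin m → ℕ+, ENNReal.ofReal (((k'+1 : ℕ) : ℝ) ^ (|a| + |b|)) *
            ∑' nn : ℕ, (Nat.card {y : Fin (k'+1) → ℕ+ // (∑ j, ((y j : ℕ))) = nn} : ℝ≥0∞) *
              ENNReal.ofReal (G x nn) := ENNReal.tsum_le_tsum hDle
        _ = _ := ENNReal.tsum_mul_left
    exact ne_top_of_le_ne_top (ENNReal.mul_ne_top ENNReal.ofReal_ne_top h1) hle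
  · intro h2
    exact ne_top_of_le_ne_top h2 (ENNReal.tsum_le_tsum hCle)

lemma maxcrit (m : ℕ) (A : Fin m → ℝ) (c1 b : ℝ) :
    (c1 < b ∧ ∀ J : Finset (Fin m), J.Nonempty → (∑ j ∈ J, (A j + 1)) + max c1 0 < b)
      ↔ (c1 < b ∧ ∀ J : Finset (Fin m), J.Nonempty →
          (∑ j ∈ J, (A j + 1)) < b ∧ c1 + ∑ j ∈ J, (A j + 1) < b) := by
  constructor
  · rintro ⟨h1, h2⟩
    refine ⟨h1, fun J hJ => ?_⟩
    have h3 := h2 J hJ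
    rcases le_or_gt c1 0 with hc | hc
    · rw [max_eq_right hc] at h3
      constructor <;> linarith
    · rw [max_eq_left hc.le] at h3
      constructor <;> linarith
  · rintro ⟨h1, h2⟩
    refine ⟨h1, fun J hJ => ?_⟩
    have h3 := h2 J hJ
    rcases le_or_gt c1 0 with hc | hc
    · rw [max_eq_right hc]
      linarith [h3.1]
    · rw [max_eq_left hc.le]
      linarith [h3.2]

/-- Lemma on higher zeta series with a grouped block of `k` variables:
the three conditions (summability of the original series, summability of the reduced
series with `i_{m+1}^{a+k-1}`, and the explicit inequality on `b`) are equivalent. -/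
theorem zeta_series_block_summable_iff (m k : ℕ) (hm : 0 < m) (hk : 0 < k)
    (b a : ℝ) (A : Fin m → ℝ) :
    (Summable (fun i : (Fin m → ℕ+) × (Fin k → ℕ+) =>
        (∏ j, ((i.1 j : ℕ) : ℝ) ^ (A j)) * (∑ j, ((i.2 j : ℕ) : ℝ)) ^ a /
          ((∑ j, ((i.1 j : ℕ) : ℝ)) + ∑ j, ((i.2 j : ℕ) : ℝ)) ^ b) ↔
      Summable (fun i : (Fin m → ℕ+) × ℕ+ =>
        (∏ j, ((i.1 j : ℕ) : ℝ)  ^ (A j)) * ((i.2 : ℕ) : ℝ) ^ (a + k - 1) /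
          ((∑ j, ((i.1 j : ℕ) : ℝ)) + ((i.2 : ℕ) : ℝ)) ^ b)) ∧
    (Summable (fun i : (Fin m → ℕ+) × ℕ+ =>
        (∏ j, ((i.1 j : ℕ) : ℝ) ^ (A j)) * ((i.2 : ℕ) : ℝ) ^ (a + k - 1) /
          ((∑ j, ((i.1 j : ℕ) : ℝ)) + ((i.2 : ℕ) : ℝ)) ^ b) ↔
      (a + k < b ∧
        ∀ J : Finset (Fin m), J.Nonempty →
          (∑ j ∈ J, (A j + 1)) < b ∧ a + k + ∑ j ∈ J, (A j + 1) < b)) := by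
  obtain ⟨k', rfl⟩ : ∃ k', k = k' + 1 := ⟨k - 1, (Nat.succ_pred_eq_of_pos hk).symm⟩
  constructor
  · exact block_collapse m k' b a A
  · have hstep := step_lemma m hm A (a + ((k'+1 : ℕ) : ℝ) - 1) b
      (fun b' => core_criterion m A b')
    have hc1 : (a + ((k'+1 : ℕ) : ℝ) - 1) + 1 = a + ((k'+1 : ℕ) : ℝ) := by ring
    rw [hc1] at hstep
    exact hstep.trans (maxcrit m A (a + ((k'+1 : ℕ) : ℝ)) b)
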